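/- arXiv:math/0503495 — 3 statements merged into one kernel-verified Lean document; each statement's English description precedes it below -/
import Mathlib

section
/- Let W^(m) = (w_1, ..., w_m) be an orthogonal basis of the Krylov space K^(m)(A,b) obtained by Gram–Schmidt applied to the Krylov sequence b, Ab, ..., A^{m-1}b, where A is symmetric. Then T^(m) = (W^(m))ᵗ A W^(m) is a symmetric tridiagonal matrix, i.e., its (i,j) entry vanishes whenever |i - j| ≥ 2. -/
open Matrix

/-- The Krylov space `K^(m)(A, b) = span(b, Ab, ..., A^{m-1} b)`. -/
def Krylov {p : ℕ} (A : Matrix (Fin p) (Fin p) ℝ) (b : Fin p → ℝ) (m : ℕ) :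
    Submodule ℝ (Fin p → ℝ) :=
  Submodule.span ℝ {v | ∃ j < m, v = (A ^ j).mulVec b}

lemma dot_span_zero {p : ℕ} (u : Fin p → ℝ) (S : Set (Fin p → ℝ))
    (h : ∀ v ∈ S, u ⬝ᵥ v = 0) : ∀ x ∈ Submodule.span ℝ S, u ⬝ᵥ x = 0 := by
  intro x hx
  induction hx using Submodule.span_induction with
  | mem v hv => exact h v hv
  | zero => simp
  | add x y _ _ hx hy => simp [dotProduct_add, hx, hy]
  | smul a x _ hx => simp [dotProduct_smul, hx]

lemma mulVec_krylov {p : ℕ} (A : Matrix (Fin p) (Fin p) ℝ) (b : Fin p → ℝ) (k : ℕ)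
    {x : Fin p → ℝ} (hx : x ∈ Krylov A b k) : A.mulVec x ∈ Krylov A b (k + 1) := by
  induction hx using Submodule.span_induction with
  | mem v hv =>
    obtain ⟨j, hj, rfl⟩ := hv
    apply Submodule.subset_span
    exact ⟨j + 1, by omega, by rw [pow_succ', Matrix.mulVec_mulVec]⟩
  | zero => simp [Matrix.mulVec_zero, Submodule.zero_mem]
  | add x y _ _ hx hy => rw [Matrix.mulVec_add]; exact Submodule.add_mem _ hx hy
  | smul a x _ hx => rw [Matrix.mulVec_smul]; exact Submodule.smul_mem _ a hx

/-- if `w₁, ..., w_m` is an orthogonal basis of `K^(m)(A,b)` obtained by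
Gram–Schmidt from the Krylov sequence (so the `wᵢ` are pairwise orthogonal and the first `i`
of them span `K^(i)(A,b)` for each `i`), and `A` is symmetric, then
`T^(m) = (W^(m))ᵗ A W^(m)` is symmetric and tridiagonal: `T i j = 0` whenever `|i - j| ≥ 2`. -/
theorem pls_tridiagonal {p m : ℕ} (A : Matrix (Fin p) (Fin p) ℝ) (hA : A.IsSymm)
    (b : Fin p → ℝ) (w : Fin m → (Fin p → ℝ))
    (horth : ∀ i j : Fin m, i ≠ j → w i ⬝ᵥ w j = 0)
    (hspan : ∀ i : Fin m,
      Submodule.span ℝ {v | ∃ j : Fin m, j ≤ i ∧ v = w j} = Krylov A b (i + 1))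
    (T : Matrix (Fin m) (Fin m) ℝ) (hT : ∀ i j : Fin m, T i j = w i ⬝ᵥ A.mulVec (w j)) :
    T.IsSymm ∧ ∀ i j : Fin m, ((i : ℕ) + 2 ≤ (j : ℕ) ∨ (j : ℕ) + 2 ≤ (i : ℕ)) → T i j = 0 := by
  have hsymm : T.IsSymm := by
    ext i j
    rw [Matrix.transpose_apply, hT, hT, Matrix.dotProduct_mulVec, ← Matrix.mulVec_transpose,
      hA, dotProduct_comm]
  have aux : ∀ i j : Fin m, (j : ℕ) + 2 ≤ (i : ℕ) → T i j = 0 := by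
    intro i j h
    have hjm : (j : ℕ) + 1 < m := by have := i.isLt; omega
    set k : Fin m := ⟨(j : ℕ) + 1, hjm⟩ with hk
    have hw : w j ∈ Krylov A b ((j : ℕ) + 1) := by
      rw [← hspan j]; exact Submodule.subset_span ⟨j, le_refl _, rfl⟩
    have hAw : A.mulVec (w j) ∈ Krylov A b ((k : ℕ) + 1) :=
      mulVec_krylov A b _ hw
    rw [← hspan k] at hAw
    rw [hT]
    refine dot_span_zero _ _ ?_ _ hAw
    rintro v ⟨l, hl, rfl⟩
    refine horth i l ?_
    intro he
    have : (l : ℕ) ≤ (j : ℕ) + 1 := hl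
    omega
  refine ⟨hsymm, fun i j hij => ?_⟩
  rcases hij with h | h
  · have := congrFun (congrFun hsymm j) i
    rw [Matrix.transpose_apply] at this
    rw [this]
    exact aux j i h
  · exact aux i j h
end

section
/- Suppose dim K^(m)(A,b) = m. Then the PLS estimator satisfies β̂_PLS^(m) = π^(m)(A)·b, where π^(m) is the polynomial such that π^(m)(T^(m)) = (T^(m))⁻ (Moore–Penrose inverse), i.e., λ·π^(m)(λ) = 1 - ∏_{i=1}^m (1 - λ/μ_i^(m)) with μ_i^(m) the nonzero eigenvalues of T^(m). -/
/-!
Since `W Wᵀ` is the orthogonal projection onto `K^(m)(A, b)`, which contains `b, Ab, …, A^{m-1} b`,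
one gets `T^j (Wᵀ b) = Wᵀ (A^j b)` and `W T^j Wᵀ b = A^j b` for `j < m`; hence
`W q(T) Wᵀ b = q(A) b` for every polynomial `q` of degree `< m`, and `deg π < m` by its defining
identity. It remains to see `T⁻ = π(T)`. The Krylov space lies in the row space of `X`, on which
`X` is injective, so `T = (XW)ᵀ(XW)` is nonsingular and `T⁻ = T⁻¹`. Every eigenvalue `μ` of `T` is
then nonzero, so `μ π(μ) = 1` (the factor `1 - μ/μ` kills the product), and the functional
calculus of the symmetric matrix `T` gives `T π(T) = 1`.
-/

open Matrix

open Polynomial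

section Compression

variable {R n k : Type*} [CommRing R] [Fintype n] [Fintype k] [DecidableEq k]
  {W : Matrix n k R} {A : Matrix n n R} {b : n → R} {m : ℕ}

theorem Matrix.mulVec_transpose_mulVec_of_mem_span (hW : Wᵀ * W = 1) {u : n → R}
    (hu : u ∈ Submodule.span R (Set.range Wᵀ)) : W *ᵥ (Wᵀ *ᵥ u) = u := by
  obtain ⟨c, rfl⟩ : u ∈ LinearMap.range W.mulVecLin := by rwa [range_mulVecLin]
  simp only [mulVecLin_apply, mulVec_mulVec, hW, one_mulVec]

theorem Matrix.pow_compress_mulVec [DecidableEq n]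
    (hfix : ∀ j < m, W *ᵥ (Wᵀ *ᵥ (A ^ j *ᵥ b)) = A ^ j *ᵥ b) {j : ℕ} (hj : j < m) :
    (Wᵀ * A * W) ^ j *ᵥ (Wᵀ *ᵥ b) = Wᵀ *ᵥ (A ^ j *ᵥ b) := by
  induction j with
  | zero => simp
  | succ j ih =>
    rw [pow_succ', ← mulVec_mulVec, ih (by omega), ← mulVec_mulVec, ← mulVec_mulVec,
      hfix j (by omega)]
    simp only [mulVec_mulVec, pow_succ']

theorem Matrix.aeval_compress_mulVec [DecidableEq n]
    (hfix : ∀ j < m, W *ᵥ (Wᵀ *ᵥ (A ^ j *ᵥ b)) = A ^ j *ᵥ b) {q : R[X]} (hq : q.degree < m) :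
    W *ᵥ (aeval (Wᵀ * A * W) q *ᵥ (Wᵀ *ᵥ b)) = aeval A q *ᵥ b := by
  simp only [aeval_eq_sum_range, sum_mulVec, mulVec_sum, smul_mulVec, mulVec_smul]
  refine Finset.sum_congr rfl fun j _ => ?_
  by_cases hqj : q.coeff j = 0
  · simp [hqj]
  · have hj : j < m := by exact_mod_cast (le_degree_of_ne_zero hqj).trans_lt hq
    rw [pow_compress_mulVec hfix hj, hfix j hj]

end Compression

theorem pow_mulVec_mem_krylov {p : ℕ} (A : Matrix (Fin p) (Fin p) ℝ) (b : Fin p → ℝ) {j m : ℕ}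
    (hj : j < m) : A ^ j *ᵥ b ∈ Krylov A b m :=
  Submodule.subset_span ⟨j, hj, rfl⟩

theorem krylov_le_range_transpose {n p : ℕ} (X : Matrix (Fin n) (Fin p) ℝ) (y : Fin n → ℝ)
    (m : ℕ) : Krylov (Xᵀ * X) (Xᵀ *ᵥ y) m ≤ LinearMap.range Xᵀ.mulVecLin := by
  refine Submodule.span_le.mpr ?_
  rintro _ ⟨j, -, rfl⟩
  cases j with
  | zero => exact ⟨y, by simp only [mulVecLin_apply, pow_zero, one_mulVec]⟩
  | succ j => exact ⟨(X * (Xᵀ * X) ^ j) *ᵥ (Xᵀ *ᵥ y), by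
      simp only [mulVecLin_apply, mulVec_mulVec, pow_succ', Matrix.mul_assoc]⟩

section Gram

variable {n p k : Type*} [Fintype n] [Fintype p] [Fintype k]

theorem Matrix.dotProduct_eq_zero_of_mem_range_transpose {X : Matrix n p ℝ} {u w : p → ℝ}
    (hu : u ∈ LinearMap.range Xᵀ.mulVecLin) (hw : X *ᵥ w = 0) : u ⬝ᵥ w = 0 := by
  obtain ⟨z, rfl⟩ := hu
  rw [mulVecLin_apply, dotProduct_comm, dotProduct_mulVec, vecMul_transpose, hw, zero_dotProduct]

theorem Matrix.det_transpose_mul_gram_mul_ne_zero [DecidableEq k] {X : Matrix n p ℝ}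
    {W : Matrix p k ℝ} (hW : Wᵀ * W = 1)
    (hWX : LinearMap.range W.mulVecLin ≤ LinearMap.range Xᵀ.mulVecLin) :
    (Wᵀ * (Xᵀ * X) * W).det ≠ 0 := by
  rw [Ne, ← exists_mulVec_eq_zero_iff]
  rintro ⟨v, hv, hTv⟩
  have hXWv : X *ᵥ (W *ᵥ v) = 0 := by
    have hquad := congrArg (v ⬝ᵥ ·) hTv
    rwa [show Wᵀ * (Xᵀ * X) * W = (X * W)ᵀ * (X * W) by simp [transpose_mul, Matrix.mul_assoc],
      ← mulVec_mulVec, dotProduct_mulVec, vecMul_transpose, dotProduct_zero,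
      dotProduct_self_eq_zero, ← mulVec_mulVec] at hquad
  have hWv : W *ᵥ v = 0 :=
    dotProduct_self_eq_zero.mp (dotProduct_eq_zero_of_mem_range_transpose (hWX ⟨v, rfl⟩) hXWv)
  exact hv (by simpa [mulVec_mulVec, hW] using congrArg (Wᵀ *ᵥ ·) hWv)

end Gram

section Interpolation

variable {ι : Type*} {q : ℝ[X]} {s : Finset ι} {c : ι → ℝ}

theorem Polynomial.degree_lt_card_of_mul_eval_eq
    (hq : ∀ x : ℝ, x * q.eval x = 1 - ∏ i ∈ s, (1 - x / c i)) : q.degree < s.card := by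
  have hpoly : X * q = 1 - ∏ i ∈ s, (1 - C (c i)⁻¹ * X) := Polynomial.funext fun x => by
    simp [hq, div_eq_inv_mul, eval_prod]
  have hprod : (∏ i ∈ s, (1 - C (c i)⁻¹ * X)).natDegree ≤ s.card := by
    refine (natDegree_prod_le _ _).trans (Finset.sum_le_card_nsmul _ _ 1 fun i _ => ?_) |>.trans
      (by simp)
    exact (natDegree_sub_le _ _).trans (by simpa using natDegree_C_mul_le (c i)⁻¹ (X : ℝ[X]))
  rcases eq_or_ne q 0 with rfl | hq0
  · simp
  have hdeg : q.natDegree + 1 ≤ s.card :=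
    calc q.natDegree + 1 = (X * q).natDegree := (natDegree_X_mul hq0).symm
      _ ≤ max (1 : ℝ[X]).natDegree (∏ i ∈ s, (1 - C (c i)⁻¹ * X)).natDegree :=
        hpoly ▸ natDegree_sub_le _ _
      _ ≤ s.card := by simpa using hprod
  rw [degree_eq_natDegree hq0]
  exact_mod_cast hdeg

theorem Polynomial.mul_eval_eq_one_of_mem
    (hq : ∀ x : ℝ, x * q.eval x = 1 - ∏ i ∈ s, (1 - x / c i)) {i : ι} (hi : i ∈ s)
    (hc : c i ≠ 0) : c i * q.eval (c i) = 1 := by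
  rw [hq, Finset.prod_eq_zero hi (by rw [div_self hc, sub_self]), sub_zero]

end Interpolation

theorem mul_aeval_eq_one_of_forall_mem_spectrum {A : Type*} [Ring A] [StarRing A] [Algebra ℝ A]
    [TopologicalSpace A] [ContinuousFunctionalCalculus ℝ A IsSelfAdjoint] {a : A}
    (ha : IsSelfAdjoint a) {q : ℝ[X]} (hq : ∀ x ∈ spectrum ℝ a, x * q.eval x = 1) :
    a * aeval a q = 1 := by
  have h : aeval a (X * q) = aeval a (1 : ℝ[X]) := by
    rw [← cfc_polynomial (X * q) a, ← cfc_polynomial (1 : ℝ[X]) a]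
    exact cfc_congr fun x hx => by simp [hq x hx]
  simpa using h

theorem eq_of_mul_mul_self {M : Type*} [Monoid M] {a g p : M} (hg : a * g * a = a)
    (hp : a * p = 1) (hp' : p * a = 1) : g = p :=
  calc g = p * a * g * (a * p) := by rw [hp, hp', one_mul, mul_one]
    _ = p * (a * g * a) * p := by simp only [mul_assoc]
    _ = p := by rw [hg, hp', one_mul]

theorem pls_estimator_poly_general {n p m : ℕ} (X : Matrix (Fin n) (Fin p) ℝ) (y : Fin n → ℝ)
    (A : Matrix (Fin p) (Fin p) ℝ) (hA : A = Xᵀ * X)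
    (b : Fin p → ℝ) (hb : b = Xᵀ.mulVec y)
    (W : Matrix (Fin p) (Fin m) ℝ) (hWorth : Wᵀ * W = 1)
    (hWspan : Submodule.span ℝ (Set.range Wᵀ) = Krylov A b m)
    (T : Matrix (Fin m) (Fin m) ℝ) (hT : T = Wᵀ * A * W) (hTh : T.IsHermitian)
    (π : Polynomial ℝ)
    (hπ : ∀ x : ℝ, x * π.eval x =
      1 - ∏ i ∈ Finset.univ.filter (fun i => hTh.eigenvalues i ≠ 0),
        (1 - x / hTh.eigenvalues i))
    (Tpinv : Matrix (Fin m) (Fin m) ℝ)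
    (h3 : T * Tpinv * T = T) :
    W.mulVec (Tpinv.mulVec (Wᵀ.mulVec b)) = (Polynomial.aeval A π).mulVec b := by
  have hfix : ∀ j < m, W *ᵥ (Wᵀ *ᵥ (A ^ j *ᵥ b)) = A ^ j *ᵥ b := fun j hj =>
    W.mulVec_transpose_mulVec_of_mem_span hWorth (hWspan ▸ pow_mulVec_mem_krylov A b hj)
  have hT_unit : IsUnit T := by
    refine (isUnit_iff_isUnit_det T).mpr (Ne.isUnit ?_)
    rw [hT, hA]
    refine det_transpose_mul_gram_mul_ne_zero hWorth ?_
    rw [range_mulVecLin, col, hWspan, hA, hb]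
    exact krylov_le_range_transpose X y m
  have hspec : ∀ x ∈ spectrum ℝ T, x * π.eval x = 1 := fun x hx => by
    have hx0 : x ≠ 0 := ne_of_mem_of_not_mem hx (spectrum.zero_notMem ℝ hT_unit)
    obtain ⟨i, rfl⟩ := hTh.spectrum_real_eq_range_eigenvalues ▸ hx
    exact mul_eval_eq_one_of_mem hπ (by simpa using hx0) hx0
  have hTπ : T * aeval T π = 1 := mul_aeval_eq_one_of_forall_mem_spectrum hTh.isSelfAdjoint hspec
  have hdeg : π.degree < m := (degree_lt_card_of_mul_eval_eq hπ).trans_le <| by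
    exact_mod_cast (Finset.card_filter_le _ _).trans_eq (Finset.card_fin m)
  rw [eq_of_mul_mul_self h3 hTπ (mul_eq_one_comm.mp hTπ), hT]
  exact aeval_compress_mulVec hfix hdeg

/-- with `A = XᵗX`, `b = Xᵗy`, suppose `dim K^(m)(A,b) = m`, let `W^(m)` be an
orthonormal basis of `K^(m)(A,b)` and `T^(m) = (W^(m))ᵗ A W^(m)`.  If `π^(m)` is the
polynomial with `λ·π^(m)(λ) = 1 - ∏ (1 - λ/μᵢ^(m))` (product over the nonzero eigenvalues
`μᵢ^(m)` of `T^(m)`), so that `π^(m)(T^(m)) = (T^(m))⁻` is the Moore–Penrose inverse, then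
the PLS estimator `β̂^(m) = W^(m) (T^(m))⁻ (W^(m))ᵗ b` satisfies `β̂^(m) = π^(m)(A)·b`. -/
theorem pls_estimator_poly {n p m : ℕ} (X : Matrix (Fin n) (Fin p) ℝ) (y : Fin n → ℝ)
    (A : Matrix (Fin p) (Fin p) ℝ) (hA : A = Xᵀ * X)
    (b : Fin p → ℝ) (hb : b = Xᵀ.mulVec y)
    (hdim : Module.finrank ℝ (Krylov A b m) = m)
    (W : Matrix (Fin p) (Fin m) ℝ) (hWorth : Wᵀ * W = 1)
    (hWspan : Submodule.span ℝ (Set.range Wᵀ) = Krylov A b m)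
    (T : Matrix (Fin m) (Fin m) ℝ) (hT : T = Wᵀ * A * W) (hTh : T.IsHermitian)
    (π : Polynomial ℝ)
    (hπ : ∀ x : ℝ, x * π.eval x =
      1 - ∏ i ∈ Finset.univ.filter (fun i => hTh.eigenvalues i ≠ 0),
        (1 - x / hTh.eigenvalues i))
    (Tpinv : Matrix (Fin m) (Fin m) ℝ)
    (h1 : (T * Tpinv)ᵀ = T * Tpinv) (h2 : (Tpinv * T)ᵀ = Tpinv * T)
    (h3 : T * Tpinv * T = T) (h4 : Tpinv * T * Tpinv = Tpinv) :
    W.mulVec (Tpinv.mulVec (Wᵀ.mulVec b)) = (Polynomial.aeval A π).mulVec b :=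
  pls_estimator_poly_general X y A hA b hb W hWorth hWspan T hT hTh π hπ Tpinv h3
end

section
/- The PLS shrinkage factor at the smallest positive eigenvalue satisfies 0 ≤ f^(m)(λ_p) < 1, where f^(m)(λ) = 1 - ∏_{j=1}^m (1 - λ/μ_j^(m)). This follows because the smallest eigenvalue μ_m^(m) of T^(m) satisfies λ_p < μ_m^(m), so g^(m) = 1 - f^(m) maps λ_p into (0,1]. -/
/-!
Every eigenvalue of `T = Wᵀ A W` is a Rayleigh quotient `xᵀ A x` of `A` at a unit vector `x`
of the Krylov space, hence at least `λ_p`, with equality only if `A x = λ_p x`. When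
`dim K^(m) = m < m*` the Krylov spaces have not yet stabilised, so `b, A b, …, A^m b` are
linearly independent and `q(A) b ≠ 0` for every nonzero polynomial `q` of degree `≤ m`. Writing
`x = q(A) b` with `deg q < m`, the relation `(A - λ_p) x = 0` then forces `q = 0`. So every
`μ_j` exceeds `λ_p > 0`, and each factor `1 - λ_p / μ_j` of `1 - f^(m)(λ_p)` lies in `(0, 1)`.
-/

open Matrix

section Krylov

open Module Polynomial Submodule

variable {p : ℕ} (A : Matrix (Fin p) (Fin p) ℝ) (b : Fin p → ℝ)

theorem krylov_eq_span_range (n : ℕ) :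
    Krylov A b n = span ℝ (Set.range fun j : Fin n => (A ^ (j : ℕ)) *ᵥ b) := by
  have hset : {v | ∃ j < n, v = (A ^ j) *ᵥ b} = Set.range fun j : Fin n => (A ^ (j : ℕ)) *ᵥ b :=
    Set.ext fun _ => ⟨fun ⟨j, hj, hv⟩ => ⟨⟨j, hj⟩, hv.symm⟩, fun ⟨j, hv⟩ => ⟨j, j.isLt, hv.symm⟩⟩
  rw [Krylov, hset]

theorem krylov_mono : Monotone (Krylov A b) := fun _ _ hmn =>
  span_mono fun _ ⟨j, hj, hv⟩ => ⟨j, hj.trans_le hmn, hv⟩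

theorem finrank_krylov_le (n : ℕ) : finrank ℝ (Krylov A b n) ≤ n := by
  rw [krylov_eq_span_range]
  exact (finrank_range_le_card _).trans_eq (Fintype.card_fin n)

theorem krylov_succ (n : ℕ) :
    Krylov A b (n + 1) = span ℝ {b} ⊔ (Krylov A b n).map A.mulVecLin := by
  rw [krylov_eq_span_range, krylov_eq_span_range, map_span, ← span_union, ← Set.range_comp,
    Fin.range_fin_succ, Set.insert_eq]
  congr 3
  · simp
  · ext j
    simp [Fin.tail, pow_succ', mulVec_mulVec]

theorem krylov_le_of_succ_eq {n : ℕ} (h : Krylov A b (n + 1) = Krylov A b n) (k : ℕ) :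
    Krylov A b k ≤ Krylov A b n := by
  induction k with
  | zero => simp [Krylov]
  | succ k ih =>
    rw [krylov_succ, ← h, krylov_succ]
    exact sup_le_sup_left (map_mono ih) _

theorem finrank_krylov_succ {m n : ℕ} (hdim : finrank ℝ (Krylov A b m) = m)
    (hlt : m < finrank ℝ (Krylov A b n)) : finrank ℝ (Krylov A b (m + 1)) = m + 1 := by
  have hne : Krylov A b (m + 1) ≠ Krylov A b m := fun h =>
    (Submodule.finrank_mono (krylov_le_of_succ_eq A b h n)).not_gt (by rwa [hdim])
  have := Submodule.finrank_lt_finrank_of_lt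
    ((krylov_mono A b (Nat.le_add_right m 1)).lt_of_ne hne.symm)
  have := finrank_krylov_le A b (m + 1)
  omega

theorem linearIndependent_pow_mulVec {n : ℕ} (h : finrank ℝ (Krylov A b n) = n) :
    LinearIndependent ℝ fun j : Fin n => (A ^ (j : ℕ)) *ᵥ b := by
  rw [linearIndependent_iff_card_eq_finrank_span, Set.finrank, ← krylov_eq_span_range, h,
    Fintype.card_fin]

theorem exists_aeval_mulVec_of_mem_krylov {n : ℕ} {x : Fin p → ℝ} (hx : x ∈ Krylov A b n) :
    ∃ q : ℝ[X], q.degree < n ∧ aeval A q *ᵥ b = x := by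
  rw [krylov_eq_span_range, mem_span_range_iff_exists_fun] at hx
  obtain ⟨c, rfl⟩ := hx
  refine ⟨∑ j : Fin n, C (c j) * X ^ (j : ℕ), degree_sum_fin_lt c, ?_⟩
  simp only [map_sum, map_mul, aeval_C, aeval_X_pow, ← Algebra.smul_def, smul_mulVec, sum_mulVec]

theorem eq_zero_of_aeval_mulVec_eq_zero {n : ℕ}
    (hli : LinearIndependent ℝ fun j : Fin n => (A ^ (j : ℕ)) *ᵥ b) {q : ℝ[X]}
    (hq : q.degree < n) (h : aeval A q *ᵥ b = 0) : q = 0 := by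
  by_contra hq0
  have hdeg : q.natDegree < n := (natDegree_lt_iff_degree_lt hq0).2 hq
  rw [aeval_eq_sum_range' hdeg, sum_mulVec, ← Fin.sum_univ_eq_sum_range
    (fun j => (q.coeff j • A ^ j) *ᵥ b)] at h
  simp only [smul_mulVec] at h
  have hcoeff := Fintype.linearIndependent_iff.1 hli (fun j => q.coeff j) h
  refine hq0 (ext fun j => ?_)
  by_cases hj : j < n
  · exact hcoeff ⟨j, hj⟩
  · exact coeff_eq_zero_of_natDegree_lt (by omega)

theorem eq_zero_of_mem_krylov_of_mulVec_eq_smul {m : ℕ}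
    (hdim : finrank ℝ (Krylov A b (m + 1)) = m + 1) {x : Fin p → ℝ} (hx : x ∈ Krylov A b m)
    {c : ℝ} (heig : A *ᵥ x = c • x) : x = 0 := by
  obtain ⟨q, hq, rfl⟩ := exists_aeval_mulVec_of_mem_krylov A b hx
  have hqX : (X - C c) * q = 0 := by
    refine eq_zero_of_aeval_mulVec_eq_zero A b (linearIndependent_pow_mulVec A b hdim) ?_ ?_
    · calc ((X - C c) * q).degree = 1 + q.degree := by rw [degree_mul, degree_X_sub_C]
        _ < 1 + m := WithBot.add_lt_add_left (by simp) hq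
        _ = ↑(m + 1) := by push_cast; rw [add_comm]
    · rw [map_mul, ← mulVec_mulVec, map_sub, aeval_X, aeval_C, sub_mulVec, heig,
        Algebra.algebraMap_eq_smul_one, smul_mulVec, one_mulVec, sub_self]
  simp [(mul_eq_zero.1 hqX).resolve_left (X_sub_C_ne_zero c)]

end Krylov

open scoped Pointwise in
theorem Matrix.IsHermitian.posSemidef_sub_smul_one {n : Type*} [Fintype n] [DecidableEq n]
    {A : Matrix n n ℝ} (hA : A.IsHermitian) {c : ℝ}
    (hc : ∀ i, c ≤ hA.eigenvalues i) : (A - c • (1 : Matrix n n ℝ)).PosSemidef := by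
  have hB : (A - c • (1 : Matrix n n ℝ)).IsHermitian := by
    rw [← Algebra.algebraMap_eq_smul_one]
    exact hA.sub (isHermitian_diagonal _)
  rw [hB.posSemidef_iff_eigenvalues_nonneg]
  intro i
  have hspec :
      spectrum ℝ (A - c • (1 : Matrix n n ℝ)) = Set.range hA.eigenvalues - ({c} : Set ℝ) := by
    rw [← hA.spectrum_real_eq_range_eigenvalues, spectrum.sub_singleton_eq,
      Algebra.algebraMap_eq_smul_one]
  obtain ⟨_, ⟨k, rfl⟩, _, rfl, hk⟩ := hspec ▸ hB.eigenvalues_mem_spectrum_real i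
  simpa [← hk] using hc k

theorem Matrix.IsHermitian.dotProduct_eigenvectorBasis_self {m : Type*} [Fintype m]
    [DecidableEq m] {T : Matrix m m ℝ} (hT : T.IsHermitian) (j : m) :
    ⇑(hT.eigenvectorBasis j) ⬝ᵥ ⇑(hT.eigenvectorBasis j) = 1 := by
  have h := real_inner_self_eq_norm_sq (hT.eigenvectorBasis j)
  rw [hT.eigenvectorBasis.orthonormal.1 j, EuclideanSpace.inner_eq_star_dotProduct] at h
  simpa using h

theorem Matrix.IsHermitian.lt_eigenvalues_of_eq_transpose_mul_mul {p m : Type*} [Fintype p]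
    [DecidableEq p] [Fintype m] [DecidableEq m] {A : Matrix p p ℝ} (hA : A.IsHermitian)
    {c : ℝ} (hc : ∀ i, c ≤ hA.eigenvalues i) {W : Matrix p m ℝ} (hW : Wᵀ * W = 1)
    (hker : ∀ x ∈ LinearMap.range W.mulVecLin, A *ᵥ x = c • x → x = 0)
    {T : Matrix m m ℝ} (hT : T = Wᵀ * A * W) (hTh : T.IsHermitian) (j : m) :
    c < hTh.eigenvalues j := by
  subst hT
  set v := ⇑(hTh.eigenvectorBasis j)
  set x := W *ᵥ v
  have hxx : x ⬝ᵥ x = 1 := by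
    rw [dotProduct_mulVec, vecMul_mulVec, hW, vecMul_one, hTh.dotProduct_eigenvectorBasis_self]
  have hxAx : x ⬝ᵥ A *ᵥ x = hTh.eigenvalues j := by
    rw [hTh.eigenvalues_eq j, RCLike.re_to_real, star_trivial, ← mulVec_mulVec, ← mulVec_mulVec,
      dotProduct_mulVec _ Wᵀ, vecMul_transpose]
  have hB := hA.posSemidef_sub_smul_one hc
  have hq : x ⬝ᵥ (A - c • 1) *ᵥ x = hTh.eigenvalues j - c := by
    rw [sub_mulVec, smul_mulVec, one_mulVec, dotProduct_sub, dotProduct_smul, hxAx, hxx,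
      smul_eq_mul, mul_one]
  have hle : c ≤ hTh.eigenvalues j := by
    simpa [hq] using hB.dotProduct_mulVec_nonneg x
  refine hle.lt_of_ne fun heq => ?_
  have hBx : (A - c • 1) *ᵥ x = 0 :=
    (hB.dotProduct_mulVec_zero_iff x).1 (by rw [star_trivial, hq, heq, sub_self])
  rw [sub_mulVec, smul_mulVec, one_mulVec, sub_eq_zero] at hBx
  simp [hker x ⟨v, rfl⟩ hBx] at hxx

theorem prod_one_sub_div_mem_Ioc {ι : Type*} (s : Finset ι) {c : ℝ} {μ : ι → ℝ} (hc : 0 < c)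
    (hμ : ∀ j ∈ s, c < μ j) : ∏ j ∈ s, (1 - c / μ j) ∈ Set.Ioc 0 1 := by
  have hdiv : ∀ j ∈ s, 0 < c / μ j ∧ c / μ j < 1 := fun j hj =>
    ⟨div_pos hc (hc.trans (hμ j hj)), (div_lt_one (hc.trans (hμ j hj))).2 (hμ j hj)⟩
  refine ⟨Finset.prod_pos fun j hj => ?_, Finset.prod_le_one (fun j hj => ?_) fun j hj => ?_⟩ <;>
    linarith [hdiv j hj]

theorem pls_shrinkage_factor_smallest_eigenvalue_general {p m : ℕ}
    (A : Matrix (Fin p) (Fin p) ℝ) (b : Fin p → ℝ)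
    (hAh : A.IsHermitian)
    (lp : ℝ) (hlp_min : ∀ i, lp ≤ hAh.eigenvalues i)
    (hlp_pos : 0 < lp)
    (hdim : Module.finrank ℝ (Krylov A b m) = m)
    (mstar : ℕ) (hmstar : mstar = Module.finrank ℝ (Krylov A b p)) (hm : m < mstar)
    (W : Matrix (Fin p) (Fin m) ℝ) (hWorth : Wᵀ * W = 1)
    (hWspan : Submodule.span ℝ (Set.range Wᵀ) = Krylov A b m)
    (T : Matrix (Fin m) (Fin m) ℝ) (hT : T = Wᵀ * A * W) (hTh : T.IsHermitian)
    (f : ℝ → ℝ) (hf : ∀ x : ℝ, f x = 1 - ∏ j, (1 - x / hTh.eigenvalues j)) :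
    0 ≤ f lp ∧ f lp < 1 := by
  have hdim_succ := finrank_krylov_succ A b hdim (hmstar ▸ hm)
  have hker : ∀ x ∈ LinearMap.range W.mulVecLin, A *ᵥ x = lp • x → x = 0 := by
    intro x hx heig
    rw [range_mulVecLin] at hx
    exact eq_zero_of_mem_krylov_of_mulVec_eq_smul A b hdim_succ (hWspan ▸ hx) heig
  have hμ := hAh.lt_eigenvalues_of_eq_transpose_mul_mul hlp_min hWorth hker hT hTh
  obtain ⟨hpos, hle⟩ := prod_one_sub_div_mem_Ioc Finset.univ hlp_pos fun j _ => hμ j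
  rw [hf]
  constructor <;> linarith

/-- the PLS shrinkage factor at the smallest eigenvalue `λ_p > 0` of `A`
satisfies `0 ≤ f^(m)(λ_p) < 1`, where `f^(m)(λ) = 1 - ∏ⱼ (1 - λ/μⱼ^(m))` with `μⱼ^(m)` the
eigenvalues of `T^(m) = (W^(m))ᵗ A W^(m)`, `W^(m)` an orthonormal basis of the
`m`-dimensional Krylov space `K^(m)(A,b)`, and `m < m*` (with `m*` the maximal Krylov
dimension). -/
theorem pls_shrinkage_factor_smallest_eigenvalue {p m : ℕ}
    (A : Matrix (Fin p) (Fin p) ℝ) (hA : A.PosSemidef) (b : Fin p → ℝ)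
    (hAh : A.IsHermitian)
    (lp : ℝ) (hlp_min : ∀ i, lp ≤ hAh.eigenvalues i) (hlp_mem : ∃ i, hAh.eigenvalues i = lp)
    (hlp_pos : 0 < lp)
    (hdim : Module.finrank ℝ (Krylov A b m) = m)
    (mstar : ℕ) (hmstar : mstar = Module.finrank ℝ (Krylov A b p)) (hm : m < mstar)
    (W : Matrix (Fin p) (Fin m) ℝ) (hWorth : Wᵀ * W = 1)
    (hWspan : Submodule.span ℝ (Set.range Wᵀ) = Krylov A b m)
    (T : Matrix (Fin m) (Fin m) ℝ) (hT : T = Wᵀ * A * W) (hTh : T.IsHermitian)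
    (f : ℝ → ℝ) (hf : ∀ x : ℝ, f x = 1 - ∏ j, (1 - x / hTh.eigenvalues j)) :
    0 ≤ f lp ∧ f lp < 1 :=
  pls_shrinkage_factor_smallest_eigenvalue_general A b hAh lp hlp_min hlp_pos hdim mstar hmstar hm W
    hWorth hWspan T hT hTh f hf
end
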